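/- Let u : Q_{1/2} → ℝ (where Q_r = B_r × (-r², 0] ⊂ ℝⁿ × ℝ), C > 0, α, β ∈ (0,1], and suppose: (i) |u(y,t) - u(x,t) - Du(x,t)·(y-x)| ≤ C|x-y|^{1+α} for all (x,t),(y,t) ∈ Q_{1/2}, where Du(·,t) is the spatial gradient; (ii) |u(x,t) - u(x,s)| ≤ C|t-s|^β for all (x,t),(x,s) ∈ Q_{1/2}. Then there is a constant C' (depending on C, α, β, n) such that |Du(x,t) - Du(x,s)| ≤ C'|t-s|^{αβ/(1+α)} for all (x,t),(x,s) ∈ Q_{1/4} with |t-s| ≤ 1. -/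

import Mathlib

/-!
Subtracting the spatial expansions of `u(·, t)` and `u(·, s)` at `x` and testing against
`y - x = ρ (Du(x,t) - Du(x,s)) / |Du(x,t) - Du(x,s)|` gives
`ρ |Du(x,t) - Du(x,s)| ≤ 2Cρ^{1+α} + 2C|t-s|^β`, the second term coming from the time
regularity of `u` at `x` and at `y`. The scale `ρ = |t-s|^{β/(1+α)}/4` balances the two terms
(the factor `1/4` keeps `y` inside `B_{1/2}`), and dividing by `ρ` leaves `|t-s|^{αβ/(1+α)}`.
-/

open scoped RealInnerProductSpace

theorem mul_norm_sub_le_of_inner_expansions {E : Type*} [NormedAddCommGroup E]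
    [InnerProductSpace ℝ E] {f g : E → ℝ} {p q x : E} {ρ A B : ℝ} (hρ : 0 ≤ ρ)
    (hf : ∀ y, ‖y - x‖ ≤ ρ → |f y - f x - ⟪p, y - x⟫| ≤ A)
    (hg : ∀ y, ‖y - x‖ ≤ ρ → |g y - g x - ⟪q, y - x⟫| ≤ A)
    (hfg : ∀ y, ‖y - x‖ ≤ ρ → |f y - g y| ≤ B) :
    ρ * ‖p - q‖ ≤ 2 * A + 2 * B := by
  set w := ‖p - q‖⁻¹ • (p - q)
  set y := x + ρ • w
  have hyx : y - x = ρ • w := add_sub_cancel_left x _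
  have hw : ‖w‖ ≤ 1 := by
    rw [norm_smul, norm_inv, norm_norm]
    exact inv_mul_le_one_of_le₀ le_rfl (norm_nonneg _)
  have hy : ‖y - x‖ ≤ ρ := by
    rw [hyx, norm_smul, Real.norm_of_nonneg hρ]
    exact mul_le_of_le_one_right hρ hw
  have hx : ‖x - x‖ ≤ ρ := by simpa using hρ
  have htest : ⟪p, y - x⟫ - ⟪q, y - x⟫ = ρ * ‖p - q‖ := by
    rw [← inner_sub_left, hyx, real_inner_smul_right, real_inner_smul_right,
      real_inner_self_eq_norm_mul_norm, inv_mul_eq_div, mul_self_div_self]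
  have ef := abs_le.mp (hf y hy)
  have eg := abs_le.mp (hg y hy)
  have ey := abs_le.mp (hfg y hy)
  have ex := abs_le.mp (hfg x hx)
  linarith [ef.1, ef.2, eg.1, eg.2, ey.1, ey.2, ex.1, ex.2]

theorem le_rpow_of_balanced_scale {α β d K a : ℝ} (hα : 0 < α) (hd : 0 < d) (hK : 0 ≤ K)
    (h : d ^ (β / (1 + α)) / 4 * a ≤
      2 * (K * (d ^ (β / (1 + α)) / 4) ^ (1 + α)) + 2 * (K * d ^ β)) :
    a ≤ 10 * K * d ^ (α * β / (1 + α)) := by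
  set r := d ^ (β / (1 + α)) with hr
  have hr0 : 0 < r := by positivity
  have hdβ : d ^ β = r * d ^ (α * β / (1 + α)) := by
    rw [hr, ← Real.rpow_add hd]
    congr 1
    field_simp
  have hrα : (r / 4) ^ α ≤ d ^ (α * β / (1 + α)) :=
    calc (r / 4) ^ α ≤ r ^ α := Real.rpow_le_rpow (by positivity) (by linarith) hα.le
      _ = d ^ (α * β / (1 + α)) := by
        rw [hr, ← Real.rpow_mul hd.le]
        ring_nf
  have hbound : r / 4 * a ≤ r / 4 * (10 * K * d ^ (α * β / (1 + α))) :=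
    calc r / 4 * a ≤ 2 * (K * (r / 4) ^ (1 + α)) + 2 * (K * d ^ β) := h
      _ = r / 4 * (2 * K * (r / 4) ^ α + 8 * K * d ^ (α * β / (1 + α))) := by
        rw [Real.rpow_add (by positivity), Real.rpow_one, hdβ]
        ring
      _ ≤ r / 4 * (10 * K * d ^ (α * β / (1 + α))) := by
        gcongr
        nlinarith [mul_le_mul_of_nonneg_left hrα hK]
  exact le_of_mul_le_mul_left hbound (by positivity)

/-- Mixed space-time regularity: if `u` is `C^{1,α}` in space (uniformly in time) and
`C^β` in time (uniformly in space) on `Q_{1/2}`, then its spatial gradient is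
`(αβ/(1+α))`-Hölder in time on `Q_{1/4}`. -/
theorem stmt6 (n : ℕ) (u : EuclideanSpace ℝ (Fin n) → ℝ → ℝ)
    (Du : EuclideanSpace ℝ (Fin n) → ℝ → EuclideanSpace ℝ (Fin n))
    (C α β : ℝ) (hC : 0 < C) (hα : α ∈ Set.Ioc (0 : ℝ) 1) (hβ : β ∈ Set.Ioc (0 : ℝ) 1)
    (h1 : ∀ (x y : EuclideanSpace ℝ (Fin n)) (t : ℝ),
      ‖x‖ < 1 / 2 → ‖y‖ < 1 / 2 → t ∈ Set.Ioc (-((1 : ℝ) / 2) ^ 2) 0 →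
      |u y t - u x t - ⟪Du x t, y - x⟫| ≤ C * ‖x - y‖ ^ (1 + α))
    (h2 : ∀ (x : EuclideanSpace ℝ (Fin n)) (t s : ℝ),
      ‖x‖ < 1 / 2 → t ∈ Set.Ioc (-((1 : ℝ) / 2) ^ 2) 0 → s ∈ Set.Ioc (-((1 : ℝ) / 2) ^ 2) 0 →
      |u x t - u x s| ≤ C * |t - s| ^ β) :
    ∃ C' : ℝ, 0 < C' ∧ ∀ (x : EuclideanSpace ℝ (Fin n)) (t s : ℝ),
      ‖x‖ < 1 / 4 → t ∈ Set.Ioc (-((1 : ℝ) / 4) ^ 2) 0 → s ∈ Set.Ioc (-((1 : ℝ) / 4) ^ 2) 0 →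
      |t - s| ≤ 1 →
      ‖Du x t - Du x s‖ ≤ C' * |t - s| ^ (α * β / (1 + α)) := by
  obtain ⟨hα0, -⟩ := hα
  obtain ⟨hβ0, -⟩ := hβ
  refine ⟨10 * C, by positivity, fun x t s hx ht hs hts => ?_⟩
  rcases (abs_nonneg (t - s)).eq_or_lt with hd | hd
  · rw [sub_eq_zero.mp (abs_eq_zero.mp hd.symm), sub_self, norm_zero]
    positivity
  have hQ : ∀ r ∈ Set.Ioc (-((1 : ℝ) / 4) ^ 2) 0, r ∈ Set.Ioc (-((1 : ℝ) / 2) ^ 2) 0 :=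
    fun r hr => ⟨by nlinarith [hr.1], hr.2⟩
  set ρ := |t - s| ^ (β / (1 + α)) / 4 with hρ
  have hρ_le : ρ ≤ 1 / 4 := by
    have := Real.rpow_le_one (abs_nonneg _) hts (by positivity : 0 ≤ β / (1 + α))
    rw [hρ]
    linarith
  have hball : ∀ y, ‖y - x‖ ≤ ρ → ‖y‖ < 1 / 2 := fun y hy =>
    calc ‖y‖ ≤ ‖y - x‖ + ‖x‖ := norm_le_norm_sub_add y x
      _ < 1 / 2 := by linarith
  have hexp : ∀ r ∈ Set.Ioc (-((1 : ℝ) / 4) ^ 2) 0, ∀ y, ‖y - x‖ ≤ ρ →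
      |u y r - u x r - ⟪Du x r, y - x⟫| ≤ C * ρ ^ (1 + α) := fun r hr y hy =>
    (h1 x y r (by linarith) (hball y hy) (hQ r hr)).trans (by rw [norm_sub_rev]; gcongr)
  exact le_rpow_of_balanced_scale hα0 hd hC.le <|
    mul_norm_sub_le_of_inner_expansions (f := (u · t)) (g := (u · s)) (by positivity)
      (hexp t ht) (hexp s hs) (fun y hy => h2 y t s (hball y hy) (hQ t ht) (hQ s hs))
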